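/- arXiv:2212.08114 — 5 statements merged into one kernel-verified Lean document; each statement's English description precedes it below -/
import Mathlib

section
/- For all positive integers k and n with k < n, there exists a partition of n into parts, each of which has no prime factor greater than 3 (i.e., each part is of the form 2^a·3^b), such that k cannot be written as the sum of any subset of the parts. -/
private lemma le_cons_decomp {a : ℕ} {S T : Multiset ℕ} (h : S ≤ a ::ₘ T) :
    S ≤ T ∨ ∃ S', S = a ::ₘ S' ∧ S' ≤ T := by
  by_cases ha : a ∈ S
  · right
    refine ⟨S.erase a, (Multiset.cons_erase ha).symm, ?_⟩
    have h2 := Multiset.erase_le_erase a h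
    rwa [Multiset.erase_cons_head] at h2
  · left; exact (Multiset.le_cons_of_notMem ha).1 h

private lemma le_map_decomp {f : ℕ → ℕ} : ∀ {Q S : Multiset ℕ}, S ≤ Q.map f →
    ∃ T, T ≤ Q ∧ S = T.map f := by
  intro Q
  induction Q using Multiset.induction with
  | empty =>
    intro S h
    simp only [Multiset.map_zero, Multiset.le_zero] at h
    exact ⟨0, le_refl _, by simp [h]⟩
  | cons a Q ih =>
    intro S h
    rw [Multiset.map_cons] at h
    rcases le_cons_decomp h with h' | ⟨S', rfl, h'⟩
    · obtain ⟨T, hT, rfl⟩ := ih h'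
      exact ⟨T, le_trans hT (Multiset.le_cons_self _ _), rfl⟩
    · obtain ⟨T, hT, rfl⟩ := ih h'
      exact ⟨a ::ₘ T, Multiset.cons_le_cons _ hT, by simp⟩

private lemma sum_map_double (Q : Multiset ℕ) : (Q.map (fun x => 2 * x)).sum = 2 * Q.sum := by
  induction Q using Multiset.induction with
  | empty => simp
  | cons a Q ih => simp [ih, mul_add]

private lemma sm_small {p : ℕ} (h0 : 0 < p) (h3 : p ≤ 3) :
    0 < p ∧ ∀ q : ℕ, q.Prime → q ∣ p → q ≤ 3 :=
  ⟨h0, fun q _ hq => le_trans (Nat.le_of_dvd h0 hq) h3⟩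

private lemma sm_double {p : ℕ} (h : 0 < p ∧ ∀ q : ℕ, q.Prime → q ∣ p → q ≤ 3) :
    0 < 2 * p ∧ ∀ q : ℕ, q.Prime → q ∣ 2 * p → q ≤ 3 := by
  refine ⟨by omega, fun q hq hdvd => ?_⟩
  rcases (Nat.Prime.dvd_mul hq).1 hdvd with h2 | hp
  · have := Nat.le_of_dvd (by norm_num) h2; omega
  · exact h.2 q hq hp

/-- For all positive integers `k` and `n` with `k < n`, there exists a partition of `n`
(a multiset of positive integers summing to `n`) all of whose parts are 3-smooth
(no prime factor greater than 3), such that `k` is not the sum of any sub-multiset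
of the parts. -/
theorem smooth_partition_avoiding_subsum :
    ∀ k n : ℕ, 0 < k → k < n →
      ∃ P : Multiset ℕ,
        (∀ p ∈ P, 0 < p ∧ ∀ q : ℕ, q.Prime → q ∣ p → q ≤ 3) ∧
        P.sum = n ∧
        ∀ S : Multiset ℕ, S ≤ P → S.sum ≠ k := by
  intro k n
  induction n using Nat.strong_induction_on generalizing k with
  | _ n ih =>
  intro hk hkn
  rcases Nat.even_or_odd n with ⟨b, hb⟩ | ⟨b, hb⟩
  · -- n even, n = b + b
    rcases Nat.even_or_odd k with ⟨a, ha⟩ | ⟨a, ha⟩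
    · -- k even: scale a partition of b avoiding a
      obtain ⟨Q, hQsm, hQsum, hQav⟩ := ih b (by omega) a (by omega) (by omega)
      refine ⟨Q.map (fun x => 2 * x), ?_, ?_, ?_⟩
      · intro p hp
        obtain ⟨p', hp', rfl⟩ := Multiset.mem_map.1 hp
        exact sm_double (hQsm p' hp')
      · rw [sum_map_double, hQsum]; omega
      · intro S hS hSk
        obtain ⟨T, hT, rfl⟩ := le_map_decomp hS
        rw [sum_map_double] at hSk
        exact hQav T hT (by omega)
    · -- k odd: all 2's
      refine ⟨Multiset.replicate b 2, ?_, ?_, ?_⟩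
      · intro p hp
        rw [Multiset.eq_of_mem_replicate hp]
        exact sm_small (by norm_num) (by norm_num)
      · simp [Multiset.sum_replicate]; omega
      · intro S hS hSk
        obtain ⟨j, _, rfl⟩ := Multiset.le_replicate_iff.1 hS
        rw [Multiset.sum_replicate, smul_eq_mul] at hSk
        omega
  · -- n odd, n = 2*b + 1, note b ≥ 1 since n ≥ 3
    have hb1 : 1 ≤ b := by omega
    rcases Nat.even_or_odd k with ⟨a, ha⟩ | ⟨a, ha⟩
    · -- k even, k = a + a, a ≥ 1
      by_cases hab : a < b
      · -- P = 1 ::ₘ 2·Q where Q partitions b avoiding a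
        obtain ⟨Q, hQsm, hQsum, hQav⟩ := ih b (by omega) a (by omega) hab
        refine ⟨1 ::ₘ Q.map (fun x => 2 * x), ?_, ?_, ?_⟩
        · intro p hp
          rcases Multiset.mem_cons.1 hp with rfl | hp
          · exact sm_small (by norm_num) (by norm_num)
          · obtain ⟨p', hp', rfl⟩ := Multiset.mem_map.1 hp
            exact sm_double (hQsm p' hp')
        · rw [Multiset.sum_cons, sum_map_double, hQsum]; omega
        · intro S hS hSk
          rcases le_cons_decomp hS with hS' | ⟨S', rfl, hS'⟩
          · obtain ⟨T, hT, rfl⟩ := le_map_decomp hS'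
            rw [sum_map_double] at hSk
            exact hQav T hT (by omega)
          · obtain ⟨T, hT, rfl⟩ := le_map_decomp hS'
            rw [Multiset.sum_cons, sum_map_double] at hSk
            omega
      · -- k = n - 1: P = 3 ::ₘ replicate (b-1) 2
        refine ⟨3 ::ₘ Multiset.replicate (b - 1) 2, ?_, ?_, ?_⟩
        · intro p hp
          rcases Multiset.mem_cons.1 hp with rfl | hp
          · exact sm_small (by norm_num) (by norm_num)
          · rw [Multiset.eq_of_mem_replicate hp]
            exact sm_small (by norm_num) (by norm_num)
        · rw [Multiset.sum_cons, Multiset.sum_replicate, smul_eq_mul]; omega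
        · intro S hS hSk
          rcases le_cons_decomp hS with hS' | ⟨S', rfl, hS'⟩
          · obtain ⟨j, hj, rfl⟩ := Multiset.le_replicate_iff.1 hS'
            rw [Multiset.sum_replicate, smul_eq_mul] at hSk
            omega
          · obtain ⟨j, hj, rfl⟩ := Multiset.le_replicate_iff.1 hS'
            rw [Multiset.sum_cons, Multiset.sum_replicate, smul_eq_mul] at hSk
            omega
    · -- k odd, k = 2*a + 1
      by_cases ha0 : a = 0
      · -- k = 1: P = 3 ::ₘ replicate (b-1) 2
        refine ⟨3 ::ₘ Multiset.replicate (b - 1) 2, ?_, ?_, ?_⟩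
        · intro p hp
          rcases Multiset.mem_cons.1 hp with rfl | hp
          · exact sm_small (by norm_num) (by norm_num)
          · rw [Multiset.eq_of_mem_replicate hp]
            exact sm_small (by norm_num) (by norm_num)
        · rw [Multiset.sum_cons, Multiset.sum_replicate, smul_eq_mul]; omega
        · intro S hS hSk
          rcases le_cons_decomp hS with hS' | ⟨S', rfl, hS'⟩
          · obtain ⟨j, hj, rfl⟩ := Multiset.le_replicate_iff.1 hS'
            rw [Multiset.sum_replicate, smul_eq_mul] at hSk
            omega
          · obtain ⟨j, hj, rfl⟩ := Multiset.le_replicate_iff.1 hS'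
            rw [Multiset.sum_cons, Multiset.sum_replicate, smul_eq_mul] at hSk
            omega
      · -- k = 2a+1, a ≥ 1: P = 1 ::ₘ 2·Q where Q partitions b avoiding a
        obtain ⟨Q, hQsm, hQsum, hQav⟩ := ih b (by omega) a (by omega) (by omega)
        refine ⟨1 ::ₘ Q.map (fun x => 2 * x), ?_, ?_, ?_⟩
        · intro p hp
          rcases Multiset.mem_cons.1 hp with rfl | hp
          · exact sm_small (by norm_num) (by norm_num)
          · obtain ⟨p', hp', rfl⟩ := Multiset.mem_map.1 hp
            exact sm_double (hQsm p' hp')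
        · rw [Multiset.sum_cons, sum_map_double, hQsum]; omega
        · intro S hS hSk
          rcases le_cons_decomp hS with hS' | ⟨S', rfl, hS'⟩
          · obtain ⟨T, hT, rfl⟩ := le_map_decomp hS'
            rw [sum_map_double] at hSk
            omega
          · obtain ⟨T, hT, rfl⟩ := le_map_decomp hS'
            rw [Multiset.sum_cons, sum_map_double] at hSk
            exact hQav T hT (by omega)
end

section
/- For every integer r ≥ 4, there exists an integer of the form 3^e·4^f (with e, f nonnegative integers) lying in the closed interval [r+2, 2r+1]. -/
theorem aux_three_four : ∀ n : ℕ, 6 ≤ n →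
    ∃ e f : ℕ, n ≤ 3 ^ e * 4 ^ f ∧ 3 ^ e * 4 ^ f ≤ 2 * n - 3 := by
  intro n
  induction n using Nat.strong_induction_on with
  | _ n ih =>
    intro hn
    by_cases h : n < 18
    · interval_cases n <;>
        first
          | (refine ⟨2, 0, ?_, ?_⟩ <;> decide)
          | (refine ⟨1, 1, ?_, ?_⟩ <;> decide)
          | (refine ⟨0, 2, ?_, ?_⟩ <;> decide)
          | (refine ⟨3, 0, ?_, ?_⟩ <;> decide)
    · obtain ⟨e, f, h1, h2⟩ := ih ((n + 2) / 3) (by omega) (by omega)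
      refine ⟨e + 1, f, ?_, ?_⟩ <;>
      · have he : 3 ^ (e + 1) * 4 ^ f = 3 * (3 ^ e * 4 ^ f) := by ring
        rw [he]
        omega

/-- For every integer `r ≥ 4` there is an integer of the form `3^e * 4^f` in the
closed interval `[r+2, 2r+1]`. -/
theorem exists_three_four_in_interval :
    ∀ r : ℕ, 4 ≤ r → ∃ e f : ℕ, r + 2 ≤ 3 ^ e * 4 ^ f ∧ 3 ^ e * 4 ^ f ≤ 2 * r + 1 := by
  intro r hr
  obtain ⟨e, f, h1, h2⟩ := aux_three_four (r + 2) (by omega)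
  exact ⟨e, f, h1, by omega⟩
end

section
/- If r ≥ 3 and r ≠ 8, then there exists an integer of the form 2^(2e+1)·3^f (with e, f nonnegative integers) in the closed interval [r+1, 2r]. -/
/-- If `r ≥ 3` and `r ≠ 8`, there is an integer of the form `2^(2e+1) * 3^f`
(a 3-smooth number with odd 2-adic valuation) in the closed interval `[r+1, 2r]`. -/
theorem exists_odd_two_power_times_three_power_in_interval :
    ∀ r : ℕ, 3 ≤ r → r ≠ 8 →
      ∃ e f : ℕ, r + 1 ≤ 2 ^ (2 * e + 1) * 3 ^ f ∧ 2 ^ (2 * e + 1) * 3 ^ f ≤ 2 * r := by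
  intro r
  induction r using Nat.strong_induction_on with
  | _ m ih =>
    intro h3 h8
    by_cases h9 : m < 9
    · interval_cases m
      · exact ⟨0, 1, by norm_num, by norm_num⟩
      · exact ⟨0, 1, by norm_num, by norm_num⟩
      · exact ⟨0, 1, by norm_num, by norm_num⟩
      · exact ⟨1, 0, by norm_num, by norm_num⟩
      · exact ⟨1, 0, by norm_num, by norm_num⟩
      · exact absurd rfl h8
    · push_neg at h9
      by_cases hsp : 24 ≤ m ∧ m ≤ 26
      · exact ⟨2, 0, by omega, by omega⟩
      · have hk3 : 3 ≤ m / 3 := by omega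
        have hk8 : m / 3 ≠ 8 := by omega
        have hkm : m / 3 < m := by omega
        obtain ⟨e, f, h1, h2⟩ := ih (m / 3) hkm hk3 hk8
        refine ⟨e, f + 1, ?_, ?_⟩
        · have : 3 * (m / 3 + 1) ≥ m + 1 := by omega
          calc m + 1 ≤ 3 * (m / 3 + 1) := this
            _ ≤ 3 * (2 ^ (2 * e + 1) * 3 ^ f) := by
                exact Nat.mul_le_mul_left 3 h1
            _ = 2 ^ (2 * e + 1) * 3 ^ (f + 1) := by ring
        · calc 2 ^ (2 * e + 1) * 3 ^ (f + 1) = 3 * (2 ^ (2 * e + 1) * 3 ^ f) := by ring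
            _ ≤ 3 * (2 * (m / 3)) := Nat.mul_le_mul_left 3 h2
            _ ≤ 2 * m := by omega
end

section
/- Let D be a central division algebra of prime degree p over a field K, and let T be a K-torus in SL_1(D) of rank r < p - 1. Then T splits over a Galois extension L/K whose degree is prime to p, and consequently D ⊗_K L remains a division algebra. -/
open Matrix
open scoped TensorProduct

/-!
The Galois action `ρ` on the character lattice factors through the Galois group of a finite
Galois extension; its image is then a finite subgroup of `GL_r(ℤ)`. An element of order `p` there
would have a minimal polynomial over `ℚ` dividing `X ^ p - 1` of degree at most `r < p - 1`, hence
coprime to the cyclotomic polynomial `Φ_p`, so it would be trivial. By Cauchy's theorem the image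
has order prime to `p`, and its order is the degree of the splitting field `L` of `ρ`.

For `D ⊗_K L`, every left ideal is a vector space over both `D` and `L`, so its `K`-dimension is
divisible by `p ^ 2` and by the coprime `[L : K]`; hence it is `0` or everything, and each nonzero
element has a left inverse, which in this finite-dimensional algebra is an inverse.
-/

open Polynomial in
theorem Matrix.eq_one_of_pow_prime_eq_one {n : Type*} [Fintype n] [DecidableEq n] {p : ℕ}
    (hp : p.Prime) (hn : Fintype.card n < p - 1) {B : Matrix n n ℚ} (hB : B ^ p = 1) :
    B = 1 := by
  have := Fact.mk hp
  have hdvd : minpoly ℚ B ∣ cyclotomic p ℚ * (X - 1) := by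
    rw [cyclotomic_prime ℚ p, geom_sum_mul]
    exact minpoly.dvd ℚ B (by simp [hB])
  have hdeg : (minpoly ℚ B).natDegree < (cyclotomic p ℚ).natDegree := by
    rw [natDegree_cyclotomic, Nat.totient_prime hp]
    calc (minpoly ℚ B).natDegree ≤ B.charpoly.natDegree :=
          natDegree_le_of_dvd B.minpoly_dvd_charpoly B.charpoly_monic.ne_zero
      _ < p - 1 := by rwa [charpoly_natDegree_eq_dim]
  have hcop : IsCoprime (minpoly ℚ B) (cyclotomic p ℚ) :=
    ((cyclotomic.irreducible_rat hp.pos).coprime_iff_not_dvd.mpr fun h =>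
      (natDegree_le_of_dvd h (minpoly.ne_zero (Matrix.isIntegral B))).not_gt hdeg).symm
  obtain ⟨c, hc⟩ := hcop.dvd_of_dvd_mul_left hdvd
  have := congrArg (aeval B) hc
  rw [map_mul, minpoly.aeval, zero_mul, map_sub, aeval_X, map_one] at this
  exact sub_eq_zero.mp this

theorem Matrix.GeneralLinearGroup.eq_one_of_pow_prime_eq_one {n : Type*} [Fintype n]
    [DecidableEq n] {p : ℕ} (hp : p.Prime) (hn : Fintype.card n < p - 1)
    {A : GL n ℤ} (hA : A ^ p = 1) : A = 1 := by
  let f := (Int.castRingHom ℚ).mapMatrix (m := n)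
  have hAQ : f A ^ p = 1 := by
    rw [← map_pow, ← Units.val_pow_eq_pow_val, hA, Units.val_one, map_one]
  refine Units.ext (Matrix.map_injective (Int.cast_injective (α := ℚ)) ?_)
  exact (Matrix.eq_one_of_pow_prime_eq_one hp hn hAQ).trans (map_one f).symm

theorem Matrix.GeneralLinearGroup.prime_not_dvd_card_subgroup {n : Type*} [Fintype n]
    [DecidableEq n] {p : ℕ} (hp : p.Prime) (hn : Fintype.card n < p - 1)
    (G : Subgroup (GL n ℤ)) [Finite G] : ¬ p ∣ Nat.card G := by
  have := Fact.mk hp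
  intro hdvd
  obtain ⟨x, hx⟩ := exists_prime_orderOf_dvd_card' p hdvd
  have hx1 : x = 1 := Subtype.ext <|
    eq_one_of_pow_prime_eq_one hp hn (by rw [← Subgroup.coe_pow, ← hx, pow_orderOf_eq_one]; rfl)
  rw [hx1, orderOf_one] at hx
  exact hp.ne_one hx.symm

namespace IntermediateField

variable {K Ω : Type*} [Field K] [Field Ω] [Algebra K Ω]

theorem map_top_toAlgHom (L : IntermediateField K Ω) :
    (⊤ : IntermediateField K L).map (IsScalarTower.toAlgHom K L Ω) = L := by
  ext x; simp

variable [Normal K Ω]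

theorem finrank_eq_fixingSubgroup_index_of_normal (L : IntermediateField K Ω)
    [FiniteDimensional K L] [IsGalois K L] :
    Module.finrank K L = L.fixingSubgroup.index := by
  have := map_fixingSubgroup_index (E' := Ω) (L := (⊤ : IntermediateField K L))
  rwa [map_top_toAlgHom, fixingSubgroup_top, Subgroup.index_bot, IsGalois.card_aut_eq_finrank,
    eq_comm] at this

theorem exists_isGalois_fixingSubgroup_le (L₀ : IntermediateField K Ω) [FiniteDimensional K L₀] :
    ∃ S : IntermediateField K Ω, FiniteDimensional K S ∧ IsGalois K S ∧
      S.fixingSubgroup ≤ L₀.fixingSubgroup := by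
  let M := L₀ ⊓ separableClosure K Ω
  have hM : M ≤ L₀ := inf_le_left
  have : FiniteDimensional K M := .of_injective (inclusion hM).toLinearMap (inclusion_injective hM)
  have hsep : normalClosure K M Ω ≤ separableClosure K Ω :=
    normalClosure_le_iff_of_normal.mpr inf_le_right
  have : Algebra.IsSeparable K (normalClosure K M Ω) := (le_separableClosure_iff K Ω _).mp hsep
  refine ⟨normalClosure K M Ω, inferInstance, ⟨⟩, fun g hg => ?_⟩
  rw [mem_fixingSubgroup_iff] at hg ⊢
  intro x hx
  let q := ringExpChar K
  have : ExpChar Ω q := expChar_of_injective_algebraMap (algebraMap K Ω).injective q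
  -- `Ω` is purely inseparable over its separable closure, so some `x ^ q ^ n` lies in `M`.
  obtain ⟨n, y, hy⟩ := IsPurelyInseparable.pow_mem (separableClosure K Ω) q x
  have hxM : x ^ q ^ n ∈ M := ⟨pow_mem hx _, hy ▸ y.2⟩
  have hfix : g x ^ q ^ n = x ^ q ^ n := by rw [← map_pow, hg _ (le_normalClosure M hxM)]
  exact iterateFrobenius_inj Ω q n hfix

theorem exists_isGalois_fixingSubgroup_eq (S : IntermediateField K Ω) [FiniteDimensional K S]
    [IsGalois K S] (H : Subgroup (Ω ≃ₐ[K] Ω)) [H.Normal] (hS : S.fixingSubgroup ≤ H) :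
    ∃ L : IntermediateField K Ω, FiniteDimensional K L ∧ IsGalois K L ∧ L.fixingSubgroup = H := by
  let φ := AlgEquiv.restrictNormalHom (F := K) (K₁ := Ω) S
  have hφ : Function.Surjective φ := AlgEquiv.restrictNormalHom_surjective Ω
  have hker : φ.ker = S.fixingSubgroup := by
    have := map_fixingSubgroup (E' := Ω) (L := (⊤ : IntermediateField K S))
    rwa [map_top_toAlgHom, fixingSubgroup_top, MonoidHom.comap_bot, eq_comm] at this
  have : (H.map φ).Normal := Subgroup.Normal.map ‹_› φ hφ
  let Lf := fixedField (H.map φ)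
  have : IsGalois K Lf := IsGalois.of_fixedField_normal_subgroup _
  let e := equivMap Lf (IsScalarTower.toAlgHom K S Ω)
  refine ⟨Lf.map (IsScalarTower.toAlgHom K S Ω), e.toLinearEquiv.finiteDimensional,
    .of_algEquiv e, ?_⟩
  rw [map_fixingSubgroup, fixingSubgroup_fixedField, Subgroup.comap_map_eq, hker]
  exact sup_eq_left.mpr hS

end IntermediateField

theorem Module.finrank_dvd_finrank_of_algHom {K E A M : Type*} [Field K] [DivisionRing E]
    [Algebra K E] [Ring A] [Algebra K A] (φ : E →ₐ[K] A) [AddCommGroup M] [Module A M]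
    [Module K M] [IsScalarTower K A M] :
    Module.finrank K E ∣ Module.finrank K M := by
  let := Module.compHom M (φ : E →+* A)
  have : IsScalarTower K E M := ⟨fun k e m => by
    change φ (k • e) • m = k • (φ e • m)
    rw [map_smul, smul_assoc]⟩
  exact Module.finrank_dvd_finrank_right K E M

namespace Algebra.TensorProduct

variable {K E F : Type*} [Field K] [DivisionRing E] [DivisionRing F] [Algebra K E] [Algebra K F]
  [FiniteDimensional K E] [FiniteDimensional K F]

theorem eq_bot_or_eq_top_of_finrank_coprime
    (hcop : (Module.finrank K E).Coprime (Module.finrank K F))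
    (I : Submodule (E ⊗[K] F) (E ⊗[K] F)) : I = ⊥ ∨ I = ⊤ := by
  have hdvd : Module.finrank K (E ⊗[K] F) ∣ Module.finrank K (I.restrictScalars K) := by
    rw [Module.finrank_tensorProduct]
    exact hcop.mul_dvd_of_dvd_of_dvd
      (Module.finrank_dvd_finrank_of_algHom (M := I) (includeLeft : E →ₐ[K] E ⊗[K] F))
      (Module.finrank_dvd_finrank_of_algHom (M := I) (includeRight : F →ₐ[K] E ⊗[K] F))
  rcases Nat.eq_zero_or_pos (Module.finrank K (I.restrictScalars K)) with h | h
  · exact .inl ((Submodule.restrictScalars_eq_bot_iff K _ _).mp (Submodule.finrank_eq_zero.mp h))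
  · refine .inr ((Submodule.restrictScalars_eq_top_iff K _ _).mp
      (Submodule.eq_top_of_finrank_eq ?_))
    exact (Submodule.finrank_le _).antisymm (Nat.le_of_dvd h hdvd)

theorem isUnit_of_finrank_coprime (hcop : (Module.finrank K E).Coprime (Module.finrank K F))
    {z : E ⊗[K] F} (hz : z ≠ 0) : IsUnit z := by
  have hspan : Submodule.span (E ⊗[K] F) {z} = ⊤ :=
    (eq_bot_or_eq_top_of_finrank_coprime hcop _).resolve_left (by simpa using hz)
  obtain ⟨w, hw⟩ := Submodule.mem_span_singleton.mp (hspan ▸ Submodule.mem_top (x := 1))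
  have := IsArtinianRing.of_finite K (E ⊗[K] F)
  exact IsUnit.of_mul_eq_one_right w hw

end Algebra.TensorProduct

theorem torus_splits_over_prime_to_p_extension_general
    {K D : Type} [Field K] [DivisionRing D] [Algebra K D]
    {p r : ℕ} (hp : p.Prime)
    (hdim : Module.finrank K D = p ^ 2)
    (hr : r < p - 1)
    (ρ : (AlgebraicClosure K ≃ₐ[K] AlgebraicClosure K) →* GL (Fin r) ℤ)
    -- `ρ` is continuous: it kills the automorphisms fixing some finite subextension
    (hopen : ∃ L₀ : IntermediateField K (AlgebraicClosure K), FiniteDimensional K L₀ ∧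
      ∀ g : AlgebraicClosure K ≃ₐ[K] AlgebraicClosure K, (∀ x ∈ L₀, g x = x) → ρ g = 1) :
    ∃ L : IntermediateField K (AlgebraicClosure K),
      FiniteDimensional K L ∧ IsGalois K L ∧
      ¬ (p ∣ Module.finrank K L) ∧
      (∀ g : AlgebraicClosure K ≃ₐ[K] AlgebraicClosure K, (∀ x ∈ L, g x = x) → ρ g = 1) ∧
      Nontrivial (D ⊗[K] L) ∧
      ∀ z : D ⊗[K] L, z ≠ 0 → IsUnit z := by
  obtain ⟨L₀, hL₀, hρL₀⟩ := hopen
  obtain ⟨S, hS, hSgal, hSL₀⟩ := IntermediateField.exists_isGalois_fixingSubgroup_le L₀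
  have hL₀ρ : L₀.fixingSubgroup ≤ ρ.ker := fun g hg =>
    hρL₀ g ((IntermediateField.mem_fixingSubgroup_iff _ _).mp hg)
  obtain ⟨L, hL, hLgal, hLρ⟩ :=
    IntermediateField.exists_isGalois_fixingSubgroup_eq S ρ.ker (hSL₀.trans hL₀ρ)
  have hdeg : Module.finrank K L = Nat.card ρ.range := by
    rw [IntermediateField.finrank_eq_fixingSubgroup_index_of_normal, hLρ, Subgroup.index_ker]
  have : Finite ρ.range := Nat.finite_of_card_ne_zero (hdeg ▸ Module.finrank_pos.ne')
  have hpL : ¬ p ∣ Module.finrank K L :=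
    hdeg ▸ GeneralLinearGroup.prime_not_dvd_card_subgroup hp (by simpa using hr) ρ.range
  have : FiniteDimensional K D := .of_finrank_pos (by rw [hdim]; exact pow_pos hp.pos 2)
  have hcop : (Module.finrank K D).Coprime (Module.finrank K L) :=
    hdim ▸ Nat.Coprime.pow_left 2 (hp.coprime_iff_not_dvd.mpr hpL)
  refine ⟨L, hL, hLgal, hpL, fun g hg => ?_, inferInstance,
    fun z hz => Algebra.TensorProduct.isUnit_of_finrank_coprime hcop hz⟩
  exact ρ.mem_ker.mp (hLρ ▸ (IntermediateField.mem_fixingSubgroup_iff _ _).mpr hg)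

/-- Let `D` be a central division algebra of prime degree `p` over `K`, and let `T` be a
`K`-torus in `SL_1(D)` of rank `r < p - 1`, encoded by the Galois action
`ρ : Gal(K̄/K) → GL_r(ℤ)` on its character lattice `ℤ^r` (which factors through a finite
quotient, i.e. has open kernel).  Then `T` splits over a finite Galois extension `L/K`
of degree prime to `p` (i.e. `ρ` kills all automorphisms fixing `L`), and consequently
`D ⊗_K L` remains a division algebra. -/
theorem torus_splits_over_prime_to_p_extension
    {K D : Type} [Field K] [DivisionRing D] [Algebra K D]
    {p r : ℕ} (hp : p.Prime)
    (hcentral : Subalgebra.center K D = ⊥)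
    (hdim : Module.finrank K D = p ^ 2)
    (hr : r < p - 1)
    (ρ : (AlgebraicClosure K ≃ₐ[K] AlgebraicClosure K) →* GL (Fin r) ℤ)
    -- `ρ` is continuous: it kills the automorphisms fixing some finite subextension
    (hopen : ∃ L₀ : IntermediateField K (AlgebraicClosure K), FiniteDimensional K L₀ ∧
      ∀ g : AlgebraicClosure K ≃ₐ[K] AlgebraicClosure K, (∀ x ∈ L₀, g x = x) → ρ g = 1) :
    ∃ L : IntermediateField K (AlgebraicClosure K),
      FiniteDimensional K L ∧ IsGalois K L ∧
      ¬ (p ∣ Module.finrank K L) ∧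
      (∀ g : AlgebraicClosure K ≃ₐ[K] AlgebraicClosure K, (∀ x ∈ L, g x = x) → ρ g = 1) ∧
      Nontrivial (D ⊗[K] L) ∧
      ∀ z : D ⊗[K] L, z ≠ 0 → IsUnit z :=
  torus_splits_over_prime_to_p_extension_general hp hdim hr ρ hopen
end

section
/- If a semisimple algebraic group G over a field K contains a strongly dense free subgroup F, then the set of pairs (x,y) ∈ G(K) × G(K) generating a strongly dense free subgroup of G is Zariski-dense in G × G. -/
open Matrix

noncomputable section

/-- The Zariski topology on `n × n` matrices over `K`. -/
def matrixZariski (n : ℕ) (K : Type) [CommRing K] :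
    TopologicalSpace (Matrix (Fin n) (Fin n) K) :=
  TopologicalSpace.generateFrom
    {U | ∃ p : MvPolynomial (Fin n × Fin n) K,
      U = {M | MvPolynomial.eval (fun q => M q.1 q.2) p ≠ 0}}

/-- The Zariski topology on pairs of `n × n` matrices over `K` (polynomials in the
entries of both matrices). -/
def matrixZariski2 (n : ℕ) (K : Type) [CommRing K] :
    TopologicalSpace (Matrix (Fin n) (Fin n) K × Matrix (Fin n) (Fin n) K) :=
  TopologicalSpace.generateFrom
    {U | ∃ p : MvPolynomial ((Fin n × Fin n) ⊕ (Fin n × Fin n)) K,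
      U = {M | MvPolynomial.eval
        (Sum.elim (fun q => M.1 q.1 q.2) (fun q => M.2 q.1 q.2)) p ≠ 0}}

def mset {n : ℕ} {K : Type} [Field K] (S : Set (GL (Fin n) K)) :
    Set (Matrix (Fin n) (Fin n) K) :=
  (fun g : GL (Fin n) K => (g : Matrix (Fin n) (Fin n) K)) '' S

/-- `S` is Zariski-dense in `T` (as subsets of `GL_n(K)`). -/
def ZDenseIn {n : ℕ} {K : Type} [Field K] (S T : Set (GL (Fin n) K)) : Prop :=
  mset T ⊆ @closure _ (matrixZariski n K) (mset S)

def Nonabelian {G : Type} [Group G] (H : Subgroup G) : Prop :=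
  ∃ a ∈ H, ∃ b ∈ H, ¬ Commute a b

def IsFreeSubgroup {G : Type} [Group G] (H : Subgroup G) : Prop :=
  ∃ ι : Type, Nonempty (↥H ≃* FreeGroup ι)

/-- Semisimplicity (as an algebraic group) of a closed subgroup of `GL_n`, expressed on
its set of matrices: it is connected and has no nontrivial Zariski-closed connected
commutative normal subgroup. -/
def IsSemisimpleMSet {n : ℕ} {K : Type} [Field K] (S : Set (Matrix (Fin n) (Fin n) K)) :
    Prop :=
  @IsPreconnected _ (matrixZariski n K) S ∧
  ∀ N : Set (Matrix (Fin n) (Fin n) K),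
    N ⊆ S → (1 : Matrix (Fin n) (Fin n) K) ∈ N →
    (∀ x ∈ N, ∀ y ∈ N, x * y ∈ N) →
    (∀ x ∈ N, Ring.inverse x ∈ N) →
    (∀ g ∈ S, ∀ x ∈ N, g * x * Ring.inverse g ∈ N) →
    @IsClosed _ (matrixZariski n K) N →
    @IsPreconnected _ (matrixZariski n K) N →
    (∀ x ∈ N, ∀ y ∈ N, x * y = y * x) →
    N = {1}

/-- A subgroup `Δ` of `GL_n(K)` is strongly dense in `G`: it is nonabelian and every
nonabelian subgroup of it is Zariski-dense in `G`. -/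
def StronglyDenseIn {n : ℕ} {K : Type} [Field K] (Δ G : Subgroup (GL (Fin n) K)) : Prop :=
  Nonabelian Δ ∧ ∀ Δ' : Subgroup (GL (Fin n) K), Δ' ≤ Δ → Nonabelian Δ' →
    ZDenseIn (Δ' : Set (GL (Fin n) K)) (G : Set (GL (Fin n) K))

open Topology

section Aux

variable {n : ℕ} {K : Type} [Field K]

lemma my_eval_bind₁ {σ' τ' : Type} (f : τ' → K) (g : σ' → MvPolynomial τ' K)
    (p : MvPolynomial σ' K) :
    MvPolynomial.eval f (MvPolynomial.bind₁ g p)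
      = MvPolynomial.eval (fun i => MvPolynomial.eval f (g i)) p :=
  MvPolynomial.eval₂Hom_bind₁ _ _ _ _

/-- Right multiplication by a fixed matrix is Zariski continuous. -/
lemma contRight (w : Matrix (Fin n) (Fin n) K) :
    Continuous[matrixZariski n K, matrixZariski n K]
      (fun M : Matrix (Fin n) (Fin n) K => M * w) := by
  unfold matrixZariski
  rw [continuous_generateFrom_iff]
  rintro s ⟨p, rfl⟩
  set σp : Fin n × Fin n → MvPolynomial (Fin n × Fin n) K :=
    fun q => ∑ k, MvPolynomial.X (q.1, k) * MvPolynomial.C (w k q.2) with hσ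
  have hev : ∀ M : Matrix (Fin n) (Fin n) K,
      MvPolynomial.eval (fun q : Fin n × Fin n => M q.1 q.2) (MvPolynomial.bind₁ σp p)
        = MvPolynomial.eval (fun q : Fin n × Fin n => (M * w) q.1 q.2) p := by
    intro M
    have harg : (fun i => MvPolynomial.eval (fun q : Fin n × Fin n => M q.1 q.2) (σp i))
        = fun q : Fin n × Fin n => (M * w) q.1 q.2 := by
      funext q
      simp [hσ, Matrix.mul_apply]
    rw [my_eval_bind₁, harg]
  have hset : (fun M : Matrix (Fin n) (Fin n) K => M * w) ⁻¹'
        {M | MvPolynomial.eval (fun q : Fin n × Fin n => M q.1 q.2) p ≠ 0}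
      = {M | MvPolynomial.eval (fun q : Fin n × Fin n => M q.1 q.2)
          (MvPolynomial.bind₁ σp p) ≠ 0} := by
    ext M
    simp only [Set.mem_preimage, Set.mem_setOf_eq, hev]
  rw [hset]
  exact TopologicalSpace.isOpen_generateFrom_of_mem ⟨_, rfl⟩

/-- Pairing with a fixed left component is continuous into the Zariski topology on pairs. -/
lemma contPairLeft (x : Matrix (Fin n) (Fin n) K) :
    Continuous[matrixZariski n K, matrixZariski2 n K]
      (fun M : Matrix (Fin n) (Fin n) K => (x, M)) := by
  unfold matrixZariski2
  rw [continuous_generateFrom_iff]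
  rintro s ⟨p, rfl⟩
  set σp : (Fin n × Fin n) ⊕ (Fin n × Fin n) → MvPolynomial (Fin n × Fin n) K :=
    Sum.elim (fun q => MvPolynomial.C (x q.1 q.2)) (fun q => MvPolynomial.X q) with hσ
  have hev : ∀ M : Matrix (Fin n) (Fin n) K,
      MvPolynomial.eval (fun q : Fin n × Fin n => M q.1 q.2) (MvPolynomial.bind₁ σp p)
        = MvPolynomial.eval
            (Sum.elim (fun q : Fin n × Fin n => x q.1 q.2)
              (fun q : Fin n × Fin n => M q.1 q.2)) p := by
    intro M
    have harg : (fun i => MvPolynomial.eval (fun q : Fin n × Fin n => M q.1 q.2) (σp i))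
        = Sum.elim (fun q : Fin n × Fin n => x q.1 q.2)
            (fun q : Fin n × Fin n => M q.1 q.2) := by
      funext q
      cases q <;> simp [hσ]
    rw [my_eval_bind₁, harg]
  have hset : (fun M : Matrix (Fin n) (Fin n) K => (x, M)) ⁻¹'
        {M : Matrix (Fin n) (Fin n) K × Matrix (Fin n) (Fin n) K |
          MvPolynomial.eval
            (Sum.elim (fun q => M.1 q.1 q.2) (fun q => M.2 q.1 q.2)) p ≠ 0}
      = {M | MvPolynomial.eval (fun q : Fin n × Fin n => M q.1 q.2)
          (MvPolynomial.bind₁ σp p) ≠ 0} := by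
    ext M
    simp only [Set.mem_preimage, Set.mem_setOf_eq, hev]
  rw [hset]
  exact TopologicalSpace.isOpen_generateFrom_of_mem ⟨_, rfl⟩

/-- Pairing with a fixed right component is continuous into the Zariski topology on pairs. -/
lemma contPairRight (b : Matrix (Fin n) (Fin n) K) :
    Continuous[matrixZariski n K, matrixZariski2 n K]
      (fun M : Matrix (Fin n) (Fin n) K => (M, b)) := by
  unfold matrixZariski2
  rw [continuous_generateFrom_iff]
  rintro s ⟨p, rfl⟩
  set σp : (Fin n × Fin n) ⊕ (Fin n × Fin n) → MvPolynomial (Fin n × Fin n) K :=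
    Sum.elim (fun q => MvPolynomial.X q) (fun q => MvPolynomial.C (b q.1 q.2)) with hσ
  have hev : ∀ M : Matrix (Fin n) (Fin n) K,
      MvPolynomial.eval (fun q : Fin n × Fin n => M q.1 q.2) (MvPolynomial.bind₁ σp p)
        = MvPolynomial.eval
            (Sum.elim (fun q : Fin n × Fin n => M q.1 q.2)
              (fun q : Fin n × Fin n => b q.1 q.2)) p := by
    intro M
    have harg : (fun i => MvPolynomial.eval (fun q : Fin n × Fin n => M q.1 q.2) (σp i))
        = Sum.elim (fun q : Fin n × Fin n => M q.1 q.2)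
            (fun q : Fin n × Fin n => b q.1 q.2) := by
      funext q
      cases q <;> simp [hσ]
    rw [my_eval_bind₁, harg]
  have hset : (fun M : Matrix (Fin n) (Fin n) K => (M, b)) ⁻¹'
        {M : Matrix (Fin n) (Fin n) K × Matrix (Fin n) (Fin n) K |
          MvPolynomial.eval
            (Sum.elim (fun q => M.1 q.1 q.2) (fun q => M.2 q.1 q.2)) p ≠ 0}
      = {M | MvPolynomial.eval (fun q : Fin n × Fin n => M q.1 q.2)
          (MvPolynomial.bind₁ σp p) ≠ 0} := by
    ext M
    simp only [Set.mem_preimage, Set.mem_setOf_eq, hev]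
  rw [hset]
  exact TopologicalSpace.isOpen_generateFrom_of_mem ⟨_, rfl⟩

/-- The commutant of a fixed matrix is Zariski closed. -/
lemma commutantClosed (x : Matrix (Fin n) (Fin n) K) :
    @IsClosed _ (matrixZariski n K) {M : Matrix (Fin n) (Fin n) K | M * x = x * M} := by
  letI := matrixZariski n K
  rw [← isOpen_compl_iff]
  have hset : {M : Matrix (Fin n) (Fin n) K | M * x = x * M}ᶜ
      = ⋃ ij : Fin n × Fin n,
          {M : Matrix (Fin n) (Fin n) K | MvPolynomial.eval (fun q => M q.1 q.2)
            ((∑ k, MvPolynomial.X (ij.1, k) * MvPolynomial.C (x k ij.2))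
              - (∑ k, MvPolynomial.C (x ij.1 k) * MvPolynomial.X (k, ij.2))) ≠ 0} := by
    ext M
    simp only [Set.mem_compl_iff, Set.mem_setOf_eq, Set.mem_iUnion]
    have heval : ∀ ij : Fin n × Fin n,
        MvPolynomial.eval (fun q : Fin n × Fin n => M q.1 q.2)
          ((∑ k, MvPolynomial.X (ij.1, k) * MvPolynomial.C (x k ij.2))
            - (∑ k, MvPolynomial.C (x ij.1 k) * MvPolynomial.X (k, ij.2)))
        = (M * x) ij.1 ij.2 - (x * M) ij.1 ij.2 := by
      intro ij
      simp [Matrix.mul_apply]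
    constructor
    · intro h
      by_contra hc
      push_neg at hc
      apply h
      ext i j
      have h2 := hc (i, j)
      rw [heval (i, j)] at h2
      exact sub_eq_zero.1 h2
    · rintro ⟨ij, hij⟩ heq
      rw [heval ij, heq] at hij
      simp at hij
  rw [hset]
  exact isOpen_iUnion fun ij => TopologicalSpace.isOpen_generateFrom_of_mem ⟨_, rfl⟩

lemma msetInterCommutant (G0 : Subgroup (GL (Fin n) K)) (x : GL (Fin n) K) :
    mset (G0 : Set (GL (Fin n) K)) ∩
        {M : Matrix (Fin n) (Fin n) K | M * (x : Matrix (Fin n) (Fin n) K)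
          = (x : Matrix (Fin n) (Fin n) K) * M}
      = mset ((G0 ⊓ Subgroup.centralizer {x} : Subgroup (GL (Fin n) K)) :
          Set (GL (Fin n) K)) := by
  ext M
  constructor
  · rintro ⟨⟨g, hg, rfl⟩, hc⟩
    refine ⟨g, Subgroup.mem_inf.2 ⟨hg, Subgroup.mem_centralizer_iff.2 ?_⟩, rfl⟩
    rintro z hz
    rw [Set.mem_singleton_iff] at hz
    subst hz
    refine Units.ext ?_
    rw [Units.val_mul, Units.val_mul]
    exact hc.symm
  · rintro ⟨g, hg, rfl⟩
    have hx := Subgroup.mem_centralizer_iff.1 (Subgroup.mem_inf.1 hg).2 x rfl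
    refine ⟨⟨g, (Subgroup.mem_inf.1 hg).1, rfl⟩, ?_⟩
    have := congrArg Units.val hx
    rw [Units.val_mul, Units.val_mul] at this
    exact this.symm

/-- Key density lemma: if `Z` is a Zariski closed set cutting `G` in a proper subgroup `H`,
and `F` is Zariski dense in the preconnected `G`, then the part of `F` outside `Z` is still
Zariski dense in `G`. -/
lemma lemB (G F0 H : Subgroup (GL (Fin n) K)) (hHG : H ≤ G)
    (hconn : @IsPreconnected _ (matrixZariski n K) (mset (G : Set (GL (Fin n) K))))
    (hdense : mset (G : Set (GL (Fin n) K)) ⊆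
      @closure _ (matrixZariski n K) (mset (F0 : Set (GL (Fin n) K))))
    (Z : Set (Matrix (Fin n) (Fin n) K)) (hZ : @IsClosed _ (matrixZariski n K) Z)
    (hZH : mset (G : Set (GL (Fin n) K)) ∩ Z = mset (H : Set (GL (Fin n) K)))
    (hne : ∃ g ∈ G, (g : Matrix (Fin n) (Fin n) K) ∉ Z) :
    mset (G : Set (GL (Fin n) K)) ⊆ @closure _ (matrixZariski n K)
      (mset {f : GL (Fin n) K | f ∈ F0 ∧ (f : Matrix (Fin n) (Fin n) K) ∉ Z}) := by
  letI := matrixZariski n K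
  set T : Set (GL (Fin n) K) :=
    {f | f ∈ F0 ∧ (f : Matrix (Fin n) (Fin n) K) ∉ Z} with hT
  set B := closure (mset T) with hB
  have hBc : IsClosed B := isClosed_closure
  have hsub : mset (G : Set (GL (Fin n) K)) ⊆ Z ∪ B := by
    intro m hm
    have hFZB : mset (F0 : Set (GL (Fin n) K)) ⊆ Z ∪ B := by
      rintro _ ⟨f, hf, rfl⟩
      by_cases h : (f : Matrix (Fin n) (Fin n) K) ∈ Z
      · exact Or.inl h
      · exact Or.inr (subset_closure ⟨f, ⟨hf, h⟩, rfl⟩)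
    exact closure_minimal hFZB (hZ.union hBc) (hdense hm)
  by_contra hnot
  rw [Set.not_subset] at hnot
  obtain ⟨m, hmG, hmB⟩ := hnot
  have hmZ : m ∈ Z := (hsub hmG).resolve_right hmB
  have hmH : m ∈ mset (H : Set (GL (Fin n) K)) := by rw [← hZH]; exact ⟨hmG, hmZ⟩
  obtain ⟨w, hwH, rfl⟩ := hmH
  obtain ⟨g0, hg0G, hg0Z⟩ := hne
  set O : Set (Matrix (Fin n) (Fin n) K) :=
    ⋃ h ∈ H, (fun M => M * ((h⁻¹ * w : GL (Fin n) K) : Matrix (Fin n) (Fin n) K)) ⁻¹' Bᶜ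
    with hO
  have hOopen : IsOpen O :=
    isOpen_iUnion fun h => isOpen_iUnion fun _ =>
      (hBc.isOpen_compl).preimage (contRight _)
  have hHO : mset (H : Set (GL (Fin n) K)) ⊆ O := by
    rintro _ ⟨h, hh, rfl⟩
    refine Set.mem_iUnion₂.2 ⟨h, hh, ?_⟩
    show ((h : Matrix (Fin n) (Fin n) K) *
        ((h⁻¹ * w : GL (Fin n) K) : Matrix (Fin n) (Fin n) K)) ∈ Bᶜ
    have hval : (h : Matrix (Fin n) (Fin n) K) *
        ((h⁻¹ * w : GL (Fin n) K) : Matrix (Fin n) (Fin n) K)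
        = ((w : GL (Fin n) K) : Matrix (Fin n) (Fin n) K) := by
      rw [← Units.val_mul, mul_inv_cancel_left]
    rw [hval]
    exact hmB
  have hOH : mset (G : Set (GL (Fin n) K)) ∩ O ⊆ mset (H : Set (GL (Fin n) K)) := by
    rintro _ ⟨⟨g, hgG, rfl⟩, hOmem⟩
    obtain ⟨h, hh, hgB⟩ := Set.mem_iUnion₂.1 hOmem
    have hmat : (g : Matrix (Fin n) (Fin n) K) *
        ((h⁻¹ * w : GL (Fin n) K) : Matrix (Fin n) (Fin n) K)
        = ((g * (h⁻¹ * w) : GL (Fin n) K) : Matrix (Fin n) (Fin n) K) :=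
      (Units.val_mul _ _).symm
    have hinG : g * (h⁻¹ * w) ∈ G :=
      G.mul_mem hgG (G.mul_mem (G.inv_mem (hHG hh)) (hHG hwH))
    have hnotB : ((g * (h⁻¹ * w) : GL (Fin n) K) : Matrix (Fin n) (Fin n) K) ∉ B := by
      rw [← hmat]; exact hgB
    have h1 : ((g * (h⁻¹ * w) : GL (Fin n) K) : Matrix (Fin n) (Fin n) K) ∈ Z :=
      (hsub ⟨g * (h⁻¹ * w), hinG, rfl⟩).resolve_right hnotB
    have h2 : g * (h⁻¹ * w) ∈ H := by
      have hmem : ((g * (h⁻¹ * w) : GL (Fin n) K) : Matrix (Fin n) (Fin n) K)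
          ∈ mset (H : Set (GL (Fin n) K)) := by
        rw [← hZH]; exact ⟨⟨_, hinG, rfl⟩, h1⟩
      obtain ⟨h', hh'H, heq⟩ := hmem
      have : h' = g * (h⁻¹ * w) := Units.ext heq
      rwa [this] at hh'H
    have hgH : g ∈ H := by
      have hgeq : g = (g * (h⁻¹ * w)) * w⁻¹ * h := by group
      rw [hgeq]
      exact H.mul_mem (H.mul_mem h2 (H.inv_mem hwH)) hh
    exact ⟨g, hgH, rfl⟩
  have hcover : mset (G : Set (GL (Fin n) K)) ⊆ O ∪ Zᶜ := by
    intro m hm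
    by_cases h : m ∈ Z
    · exact Or.inl (hHO (by rw [← hZH]; exact ⟨hm, h⟩))
    · exact Or.inr h
  have hU : (mset (G : Set (GL (Fin n) K)) ∩ O).Nonempty :=
    ⟨(w : Matrix (Fin n) (Fin n) K), ⟨w, hHG hwH, rfl⟩, hHO ⟨w, hwH, rfl⟩⟩
  have hV : (mset (G : Set (GL (Fin n) K)) ∩ Zᶜ).Nonempty :=
    ⟨(g0 : Matrix (Fin n) (Fin n) K), ⟨g0, hg0G, rfl⟩, hg0Z⟩
  obtain ⟨m', hm'⟩ := hconn O Zᶜ hOopen hZ.isOpen_compl hcover hU hV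
  have hm'H : m' ∈ mset (H : Set (GL (Fin n) K)) := hOH ⟨hm'.1, hm'.2.1⟩
  have hm'Z : m' ∈ Z := by
    rw [← hZH] at hm'H; exact hm'H.2
  exact hm'.2.2 hm'Z

lemma free_of_le {F H : Subgroup (GL (Fin n) K)} (h : H ≤ F)
    (hfree : IsFreeSubgroup F) : IsFreeSubgroup H := by
  obtain ⟨ι, ⟨e⟩⟩ := hfree
  haveI : IsFreeGroup ↥F := IsFreeGroup.ofMulEquiv e.symm
  haveI : IsFreeGroup ↥(H.subgroupOf F) := inferInstance
  exact ⟨_, ⟨(Subgroup.subgroupOfEquivOfLe h).symm.trans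
    (IsFreeGroup.toFreeGroup (G := ↥(H.subgroupOf F)))⟩⟩

end Aux

/-- If a semisimple algebraic group `G` over `K` contains a strongly dense free subgroup
`F`, then the set of pairs `(x, y) ∈ G(K) × G(K)` generating a strongly dense free
subgroup of `G` is Zariski-dense in `G × G`. -/
theorem strongly_dense_pairs_dense
    {K : Type} [Field K] {n : ℕ}
    (G : Subgroup (GL (Fin n) K))
    (hGclosed : @IsClosed _ (matrixZariski n K) (mset (G : Set (GL (Fin n) K))))
    (hGss : IsSemisimpleMSet (mset (G : Set (GL (Fin n) K))))
    (F : Subgroup (GL (Fin n) K)) (hFG : F ≤ G)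
    (hfree : IsFreeSubgroup F) (hsd : StronglyDenseIn F G) :
    {q : Matrix (Fin n) (Fin n) K × Matrix (Fin n) (Fin n) K |
        ∃ x ∈ G, ∃ y ∈ G, q = ((x : Matrix (Fin n) (Fin n) K), (y : Matrix (Fin n) (Fin n) K))} ⊆
      @closure _ (matrixZariski2 n K)
        {q : Matrix (Fin n) (Fin n) K × Matrix (Fin n) (Fin n) K |
          ∃ x ∈ G, ∃ y ∈ G,
            q = ((x : Matrix (Fin n) (Fin n) K), (y : Matrix (Fin n) (Fin n) K)) ∧
            IsFreeSubgroup (Subgroup.closure {x, y}) ∧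
            StronglyDenseIn (Subgroup.closure {x, y}) G} := by
  classical
  letI : TopologicalSpace (Matrix (Fin n) (Fin n) K) := matrixZariski n K
  letI : TopologicalSpace (Matrix (Fin n) (Fin n) K × Matrix (Fin n) (Fin n) K) :=
    matrixZariski2 n K
  obtain ⟨y₁, hy₁F, y₂, hy₂F, hyc⟩ := hsd.1
  have hconn := hGss.1
  have hdense : mset (G : Set (GL (Fin n) K)) ⊆
      @closure _ (matrixZariski n K) (mset (F : Set (GL (Fin n) K))) :=
    hsd.2 F le_rfl hsd.1
  -- the closed commutant sets of y₁, y₂ and their intersection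
  set Z1 : Set (Matrix (Fin n) (Fin n) K) :=
    {M | M * (y₁ : Matrix (Fin n) (Fin n) K) = (y₁ : Matrix (Fin n) (Fin n) K) * M} with hZ1
  set Z2 : Set (Matrix (Fin n) (Fin n) K) :=
    {M | M * (y₂ : Matrix (Fin n) (Fin n) K) = (y₂ : Matrix (Fin n) (Fin n) K) * M} with hZ2
  set S1 : Set (GL (Fin n) K) :=
    {f | f ∈ F ∧ (f : Matrix (Fin n) (Fin n) K) ∉ Z1 ∩ Z2} with hS1
  -- density of S1 in G
  have hZHS : mset (G : Set (GL (Fin n) K)) ∩ (Z1 ∩ Z2)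
      = mset (((G ⊓ Subgroup.centralizer {y₁}) ⊓ Subgroup.centralizer {y₂} :
          Subgroup (GL (Fin n) K)) : Set (GL (Fin n) K)) := by
    rw [← Set.inter_assoc, msetInterCommutant G y₁,
      msetInterCommutant (G ⊓ Subgroup.centralizer {y₁}) y₂]
  have hS1dense : mset (G : Set (GL (Fin n) K)) ⊆
      @closure _ (matrixZariski n K) (mset S1) := by
    refine lemB G F ((G ⊓ Subgroup.centralizer {y₁}) ⊓ Subgroup.centralizer {y₂})
      (le_trans inf_le_left inf_le_left) hconn hdense (Z1 ∩ Z2)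
      (IsClosed.inter (commutantClosed _) (commutantClosed _)) hZHS ⟨y₁, hFG hy₁F, ?_⟩
    intro hmem
    apply hyc
    refine Units.ext ?_
    rw [Units.val_mul, Units.val_mul]
    exact hmem.2
  -- the strongly dense pairs set on the matrix level
  set D : Set (Matrix (Fin n) (Fin n) K × Matrix (Fin n) (Fin n) K) :=
    {q | ∃ x ∈ G, ∃ y ∈ G,
      q = ((x : Matrix (Fin n) (Fin n) K), (y : Matrix (Fin n) (Fin n) K)) ∧
      IsFreeSubgroup (Subgroup.closure {x, y}) ∧
      StronglyDenseIn (Subgroup.closure {x, y}) G} with hD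
  -- for each x ∈ S1, the pairs (x, f) with f ∈ F not commuting with x are in D
  have hPD : ∀ x ∈ S1, ∀ f, f ∈ F →
      ((f : Matrix (Fin n) (Fin n) K) * (x : Matrix (Fin n) (Fin n) K)
        ≠ (x : Matrix (Fin n) (Fin n) K) * (f : Matrix (Fin n) (Fin n) K)) →
      ((x : Matrix (Fin n) (Fin n) K), (f : Matrix (Fin n) (Fin n) K)) ∈ D := by
    intro x hx f hfF hnc
    have hncomm : ¬ Commute x f := by
      intro hcomm
      apply hnc
      have := congrArg Units.val hcomm
      rw [Units.val_mul, Units.val_mul] at this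
      exact this.symm
    have hclosle : Subgroup.closure {x, f} ≤ F := by
      rw [Subgroup.closure_le]
      rintro z hz
      rcases hz with rfl | hz
      · exact hx.1
      · rw [Set.mem_singleton_iff] at hz; subst hz; exact hfF
    have hxmem : x ∈ Subgroup.closure {x, f} :=
      Subgroup.subset_closure (Set.mem_insert _ _)
    have hfmem : f ∈ Subgroup.closure {x, f} :=
      Subgroup.subset_closure (Set.mem_insert_of_mem _ rfl)
    have hnonab : Nonabelian (Subgroup.closure {x, f}) :=
      ⟨x, hxmem, f, hfmem, hncomm⟩
    exact ⟨x, hFG hx.1, f, hFG hfF, rfl, free_of_le hclosle hfree,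
      hnonab, fun Δ' hle hna => hsd.2 Δ' (hle.trans hclosle) hna⟩
  -- step 1: for each x ∈ S1 the slice {x-matrix} × (mset G) is in the closure of D
  have step1 : ∀ x ∈ S1, ∀ m ∈ mset (G : Set (GL (Fin n) K)),
      ((x : Matrix (Fin n) (Fin n) K), m) ∈ @closure _ (matrixZariski2 n K) D := by
    intro x hx m hm
    -- a witness of non-commutation for x
    have hwit : ∃ y, y ∈ F ∧
        ((x : Matrix (Fin n) (Fin n) K) * (y : Matrix (Fin n) (Fin n) K)
          ≠ (y : Matrix (Fin n) (Fin n) K) * (x : Matrix (Fin n) (Fin n) K)) := by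
      have := hx.2
      by_cases h1 : (x : Matrix (Fin n) (Fin n) K) ∈ Z1
      · refine ⟨y₂, hy₂F, ?_⟩
        intro h
        exact this ⟨h1, h⟩
      · exact ⟨y₁, hy₁F, fun h => h1 h⟩
    obtain ⟨y, hyF, hyx⟩ := hwit
    -- density of the non-commuting part of F with x
    set Zx : Set (Matrix (Fin n) (Fin n) K) :=
      {M | M * (x : Matrix (Fin n) (Fin n) K) = (x : Matrix (Fin n) (Fin n) K) * M} with hZx
    set Tx : Set (GL (Fin n) K) :=
      {f | f ∈ F ∧ (f : Matrix (Fin n) (Fin n) K) ∉ Zx} with hTx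
    have hTdense : mset (G : Set (GL (Fin n) K)) ⊆
        @closure _ (matrixZariski n K) (mset Tx) := by
      refine lemB G F (G ⊓ Subgroup.centralizer {x}) inf_le_left hconn hdense Zx
        (commutantClosed _) (msetInterCommutant G x) ⟨y, hFG hyF, ?_⟩
      intro hmem
      exact hyx hmem.symm
    -- map m' ↦ (x, m') and use continuity
    have himg : (fun M : Matrix (Fin n) (Fin n) K =>
        ((x : Matrix (Fin n) (Fin n) K), M)) '' (mset Tx) ⊆ D := by
      rintro _ ⟨_, ⟨f, hf, rfl⟩, rfl⟩
      exact hPD x hx f hf.1 hf.2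
    have hcl := image_closure_subset_closure_image
      (s := mset Tx) (contPairLeft (x : Matrix (Fin n) (Fin n) K))
    have hmem : ((x : Matrix (Fin n) (Fin n) K), m) ∈
        @closure _ (matrixZariski2 n K)
          ((fun M : Matrix (Fin n) (Fin n) K =>
            ((x : Matrix (Fin n) (Fin n) K), M)) '' (mset Tx)) :=
      hcl ⟨m, hTdense hm, rfl⟩
    exact closure_mono himg hmem
  -- step 2: fix the right component and use density of S1
  intro q hq
  obtain ⟨a, haG, b, hbG, rfl⟩ := hq
  have hbm : (b : Matrix (Fin n) (Fin n) K) ∈ mset (G : Set (GL (Fin n) K)) :=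
    ⟨b, hbG, rfl⟩
  have ham : (a : Matrix (Fin n) (Fin n) K) ∈ mset (G : Set (GL (Fin n) K)) :=
    ⟨a, haG, rfl⟩
  have himg2 : (fun M : Matrix (Fin n) (Fin n) K =>
      (M, (b : Matrix (Fin n) (Fin n) K))) '' (mset S1) ⊆
        @closure _ (matrixZariski2 n K) D := by
    rintro _ ⟨_, ⟨x, hx, rfl⟩, rfl⟩
    exact step1 x hx _ hbm
  have hcl2 := image_closure_subset_closure_image
    (s := mset S1) (contPairRight (b : Matrix (Fin n) (Fin n) K))
  have hmem2 : ((a : Matrix (Fin n) (Fin n) K), (b : Matrix (Fin n) (Fin n) K)) ∈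
      @closure _ (matrixZariski2 n K)
        ((fun M : Matrix (Fin n) (Fin n) K =>
          (M, (b : Matrix (Fin n) (Fin n) K))) '' (mset S1)) :=
    hcl2 ⟨(a : Matrix (Fin n) (Fin n) K), hS1dense ham, rfl⟩
  exact (closure_minimal himg2 isClosed_closure) hmem2
end
end
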